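/- arXiv:2503.08475 — 2 statements merged into one kernel-verified Lean document; each statement's English description precedes it below -/
import Mathlib

section
/- Let n ≥ 2 and consider segments [a,b] with a ≤ b integers, taken modulo the identification [a,b] ∼ [a+n,b+n]. Define a multisegment as a finite formal sum of segments, and call it aperiodic if it contains no sub-multisegment of the form [a,b] + [a+1,b+1] + ... + [a+n-1,b+n-1]. Then for any aperiodic multisegment 𝔫 of positive length, there exists a segment Δ = [a,b] in 𝔫 such that every segment of the form [a',b-1] occurring in 𝔫 satisfies a' ≥ a. -/
/-! Multisegments for the cyclic quiver with `n` vertices.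

A segment `[a,b]` (with `a ≤ b` integers), taken modulo the identification
`[a,b] ∼ [a+n,b+n]`, is encoded as the pair `(a mod n, b - a) : ZMod n × ℕ`
(the class of its left endpoint together with its length minus one).
A multisegment is a finite multiset of segments. -/

/-- The segment `[a,b]` modulo the shift by `n`, encoded as
`(a mod n, b - a) : ZMod n × ℕ`. -/
def segCl (n : ℕ) (a b : ℤ) : ZMod n × ℕ := ((a : ZMod n), (b - a).toNat)

/-- The "period" `[a,b] + [a+1,b+1] + ⋯ + [a+n-1,b+n-1]`, where the segment with left
endpoint class `a` has length `k+1`. -/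
def periodBlock (n : ℕ) (a : ZMod n) (k : ℕ) : Multiset (ZMod n × ℕ) :=
  (Multiset.range n).map fun j => (a + (j : ZMod n), k)

/-- A multisegment is aperiodic if it contains no sub-multisegment of the form
`[a,b] + [a+1,b+1] + ⋯ + [a+n-1,b+n-1]`. -/
def Aperiodic (n : ℕ) (m : Multiset (ZMod n × ℕ)) : Prop :=
  ¬ ∃ (a : ZMod n) (k : ℕ), periodBlock n a k ≤ m

/-- One elementary operation: two linked segments `[a,b] + [a',b']`
(`a+1 ≤ a' ≤ b+1 ≤ b'`) in `m` are replaced by `[a,b'] + [a',b]`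
(the segment `[a',b]` being omitted when `a' = b+1`). -/
def ElemStep (n : ℕ) (m m' : Multiset (ZMod n × ℕ)) : Prop :=
  ∃ a b a' b' : ℤ, a ≤ b ∧ a + 1 ≤ a' ∧ a' ≤ b + 1 ∧ b + 1 ≤ b' ∧
    segCl n a b ∈ m ∧ segCl n a' b' ∈ m.erase (segCl n a b) ∧
    m' = ((m.erase (segCl n a b)).erase (segCl n a' b')) + {segCl n a b'} +
      (if a' ≤ b then {segCl n a' b} else 0)

/-- The degeneration order: `Preceq n 𝔫 𝔪` iff `𝔫` is obtained from `𝔪` by finitely many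
elementary operations. -/
def Preceq (n : ℕ) (m' m : Multiset (ZMod n × ℕ)) : Prop :=
  Relation.ReflTransGen (ElemStep n) m m'

/-- An elementary operation of the special form `[c,d] + [c+1,d+1] ↦ [c,d+1] + [c+1,d]`. -/
def SpecialStep (n : ℕ) (m m' : Multiset (ZMod n × ℕ)) : Prop :=
  ∃ a b : ℤ, a ≤ b ∧ segCl n a b ∈ m ∧ segCl n (a + 1) (b + 1) ∈ m.erase (segCl n a b) ∧
    m' = ((m.erase (segCl n a b)).erase (segCl n (a + 1) (b + 1))) + {segCl n a (b + 1)} +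
      (if a + 1 ≤ b then {segCl n (a + 1) b} else 0)

/-- Two segments are linked. -/
def Linked (n : ℕ) (s s' : ZMod n × ℕ) : Prop :=
  ∃ a b a' b' : ℤ, a ≤ b ∧ a' ≤ b' ∧ s = segCl n a b ∧ s' = segCl n a' b' ∧
    ((a + 1 ≤ a' ∧ a' ≤ b + 1 ∧ b + 1 ≤ b') ∨ (a' + 1 ≤ a ∧ a ≤ b' + 1 ∧ b' + 1 ≤ b))

/-- Let `n ≥ 2`. For any aperiodic multisegment `𝔫` of positive length
there exists a segment `Δ = [a,b]` in `𝔫` such that every segment of the form `[a',b-1]`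
occurring in `𝔫` satisfies `a' ≥ a`.

Here a segment is encoded as `(a, k)` (left endpoint class `a`, length `k+1`); its right
endpoint class is `a + k`.  A segment `(a',k')` is "of the form `[a',b-1]`" when
`a' + k' = a + k - 1`, and (choosing integer representatives with right endpoint exactly
`b-1`) the condition `a' ≥ a` is equivalent to `k' < k`. -/
theorem exists_good_segment (n : ℕ) (hn : 2 ≤ n) (𝔫 : Multiset (ZMod n × ℕ))
    (hap : Aperiodic n 𝔫) (hne : 𝔫 ≠ 0) :
    ∃ (a : ZMod n) (k : ℕ), (a, k) ∈ 𝔫 ∧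
      ∀ (a' : ZMod n) (k' : ℕ), (a', k') ∈ 𝔫 →
        a' + (k' : ZMod n) = a + (k : ZMod n) - 1 → k' < k := by
  haveI : NeZero n := ⟨by omega⟩
  by_contra hcon
  push_neg at hcon
  have hne' : 𝔫.toFinset.Nonempty := by
    rw [Multiset.toFinset_nonempty]; exact hne
  obtain ⟨s, hs, hmax⟩ := 𝔫.toFinset.exists_max_image Prod.snd hne'
  have hs𝔫 : s ∈ 𝔫 := Multiset.mem_toFinset.mp hs
  set k := s.2 with hk
  have step : ∀ a : ZMod n, (a, k) ∈ 𝔫 → (a - 1, k) ∈ 𝔫 := by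
    intro a ha
    obtain ⟨a', k', h1, h2, h3⟩ := hcon a k ha
    have hk' : k' ≤ k := hmax _ (Multiset.mem_toFinset.mpr h1)
    have hkk : k' = k := le_antisymm hk' h3
    rw [hkk] at h1 h2
    have ha' : a' = a - 1 := by
      have h2' : a' + (k : ZMod n) = (a - 1) + (k : ZMod n) := by rw [h2]; ring
      exact add_right_cancel h2'
    rwa [ha'] at h1
  have iter : ∀ m : ℕ, (s.1 - (m : ZMod n), k) ∈ 𝔫 := by
    intro m
    induction m with
    | zero => simpa using hs𝔫
    | succ m ih =>
      have := step _ ih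
      have heq : s.1 - ((m : ZMod n)) - 1 = s.1 - ((m + 1 : ℕ) : ZMod n) := by
        push_cast; ring
      rwa [heq] at this
  have hpb : periodBlock n s.1 k
      = (Multiset.range n).map (fun m : ℕ => (s.1 + (m : ZMod n), k)) := by
    rw [periodBlock]; simp [Multiset.map_map]
  have hmem : ∀ x ∈ periodBlock n s.1 k, x ∈ 𝔫 := by
    intro x hx
    rw [hpb] at hx
    simp only [Multiset.mem_map, Multiset.mem_range] at hx
    obtain ⟨j, hj, rfl⟩ := hx
    have heq : s.1 + (j : ZMod n) = s.1 - ((n - j : ℕ) : ZMod n) := by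
      have h1 : ((n - j : ℕ) : ZMod n) = (n : ZMod n) - (j : ZMod n) := by
        push_cast [Nat.cast_sub hj.le]; ring
      rw [h1, ZMod.natCast_self]; ring
    rw [heq]
    exact iter (n - j)
  have hinj : ∀ i ∈ Multiset.range n, ∀ j ∈ Multiset.range n,
      (s.1 + (i : ZMod n), k) = (s.1 + (j : ZMod n), k) → i = j := by
    intro i hi j hj hij
    rw [Multiset.mem_range] at hi hj
    have h1 : (i : ZMod n) = (j : ZMod n) := by
      have := congrArg Prod.fst hij
      simpa using add_left_cancel this
    have := congrArg ZMod.val h1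
    rwa [ZMod.val_cast_of_lt hi, ZMod.val_cast_of_lt hj] at this
  have hnodup : (periodBlock n s.1 k).Nodup := by
    rw [hpb]
    exact Multiset.Nodup.map_on hinj (Multiset.nodup_range n)
  exact hap ⟨s.1, k, (Multiset.le_iff_subset hnodup).mpr hmem⟩
end

section
/- Let n ≥ 2 and 𝔫 be an aperiodic multisegment (over the cyclic quiver with n vertices) of positive length. Let Δ = [a,b] be the shortest segment in 𝔫 such that any segment of the form [a',b-1] in 𝔫 satisfies a' ≥ a. Then the multisegment 𝔫' = 𝔫 - Δ + [a,b-1] (where [a,b-1] is omitted if a = b, i.e. the segment becomes empty) is again aperiodic. -/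
lemma periodBlock_eq (n : ℕ) (a : ZMod n) (k : ℕ) :
    periodBlock n a k = (Multiset.range n).map (fun j : ℕ => (a + (j : ZMod n), k)) := by
  rw [periodBlock]
  simp [Multiset.bind_singleton, Multiset.map_map]

lemma mem_periodBlock_self {n : ℕ} (hn : 0 < n) (c : ZMod n) (l : ℕ) (x : ZMod n) :
    (x, l) ∈ periodBlock n c l := by
  haveI : NeZero n := ⟨by omega⟩
  have hx : ((x - c).val : ℕ) ∈ Multiset.range n := Multiset.mem_range.mpr (ZMod.val_lt _)
  have hxc : c + (((x - c).val : ℕ) : ZMod n) = x := by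
    simp [ZMod.natCast_val, ZMod.cast_id]
  rw [periodBlock_eq, ← hxc]
  exact Multiset.mem_map_of_mem (fun j : ℕ => (c + (j : ZMod n), l)) hx

lemma periodBlock_nodup {n : ℕ} (hn : 0 < n) (c : ZMod n) (l : ℕ) :
    (periodBlock n c l).Nodup := by
  have hinj : ∀ j ∈ Multiset.range n, ∀ j' ∈ Multiset.range n,
      (fun j : ℕ => (c + (j : ZMod n), l)) j = (fun j : ℕ => (c + (j : ZMod n), l)) j' →
      j = j' := by
    intro j hj j' hj' h
    rw [Multiset.mem_range] at hj hj'
    have h1 : (j : ZMod n) = (j' : ZMod n) := by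
      have := congrArg Prod.fst h
      simpa using this
    have := congrArg ZMod.val h1
    rwa [ZMod.val_cast_of_lt hj, ZMod.val_cast_of_lt hj'] at this
  rw [periodBlock_eq]
  exact Multiset.Nodup.map_on hinj (Multiset.nodup_range n)

lemma periodBlock_le {n : ℕ} (hn : 0 < n) (c : ZMod n) (l : ℕ)
    (m : Multiset (ZMod n × ℕ)) (h : ∀ x : ZMod n, (x, l) ∈ m) :
    periodBlock n c l ≤ m := by
  refine Multiset.le_iff_count.mpr fun y => ?_
  by_cases hy : y ∈ periodBlock n c l
  · have h1 : (periodBlock n c l).count y = 1 :=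
      Multiset.count_eq_one_of_mem (periodBlock_nodup hn c l) hy
    rw [periodBlock_eq] at hy
    obtain ⟨j, hj, rfl⟩ := Multiset.mem_map.mp hy
    rw [h1]
    exact Multiset.one_le_count_iff_mem.mpr (h _)
  · simp [Multiset.count_eq_zero_of_notMem hy]

/-- Let `n ≥ 2` and `𝔫` an aperiodic multisegment of positive length.
Let `Δ = (a,k)` (i.e. `[a, a+k]`) be a shortest segment in `𝔫` such that any segment of
the form `[a', b-1]` (i.e. any `(a',k') ∈ 𝔫` with right endpoint class `a'+k' = a+k-1`)
satisfies `a' ≥ a` (equivalently `k' < k`).  Then `𝔫' = 𝔫 - Δ + [a, b-1]` (the shortened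
segment being omitted when `k = 0`) is again aperiodic. -/
theorem aperiodic_shorten (n : ℕ) (hn : 2 ≤ n) (𝔫 : Multiset (ZMod n × ℕ))
    (hap : Aperiodic n 𝔫) (hne : 𝔫 ≠ 0) (a : ZMod n) (k : ℕ) (hmem : (a, k) ∈ 𝔫)
    (hgood : ∀ (a' : ZMod n) (k' : ℕ), (a', k') ∈ 𝔫 →
      a' + (k' : ZMod n) = a + (k : ZMod n) - 1 → k' < k)
    (hmin : ∀ (c : ZMod n) (l : ℕ), (c, l) ∈ 𝔫 →
      (∀ (c' : ZMod n) (l' : ℕ), (c', l') ∈ 𝔫 →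
        c' + (l' : ZMod n) = c + (l : ZMod n) - 1 → l' < l) → k ≤ l) :
    Aperiodic n (𝔫.erase (a, k) + (if k = 0 then 0 else {(a, k - 1)})) := by
  intro ⟨c, l, hle⟩
  have hn0 : 0 < n := by omega
  haveI : NeZero n := ⟨by omega⟩
  have hmemall : ∀ x : ZMod n, (x, l) ∈ 𝔫.erase (a, k) + (if k = 0 then 0 else {(a, k - 1)}) :=
    fun x => Multiset.mem_of_le hle (mem_periodBlock_self hn0 c l x)
  have hN : ¬ ∀ x : ZMod n, (x, l) ∈ 𝔫 := fun h =>
    hap ⟨c, l, periodBlock_le hn0 c l 𝔫 h⟩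
  by_cases hk : k = 0
  · exact hN fun x => Multiset.mem_of_mem_erase (by simpa [hk] using hmemall x)
  · push_neg at hN
    obtain ⟨x0, hx0⟩ := hN
    have hx0' := hmemall x0
    rw [if_neg hk, Multiset.mem_add] at hx0'
    have hx0eq : (x0, l) = (a, k - 1) := by
      rcases hx0' with h | h
      · exact absurd (Multiset.mem_of_mem_erase h) hx0
      · simpa using h
    have hl : l = k - 1 := (Prod.mk.injEq _ _ _ _).mp hx0eq |>.2
    have hx0a : x0 = a := (Prod.mk.injEq _ _ _ _).mp hx0eq |>.1
    have hnotmem : (a, k - 1) ∉ 𝔫 := hx0eq ▸ hx0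
    have hmem𝔫 : ∀ x : ZMod n, x ≠ a → (x, k - 1) ∈ 𝔫 := by
      intro x hx
      have := hmemall x
      rw [if_neg hk, Multiset.mem_add, hl] at this
      rcases this with h | h
      · exact Multiset.mem_of_mem_erase h
      · exact absurd (by simpa using (Prod.mk.injEq _ _ _ _).mp (Multiset.mem_singleton.mp h) |>.1) hx
    haveI : Fact (1 < n) := ⟨by omega⟩
    have ha1 : a + 1 ≠ a := by
      intro h
      have : (1 : ZMod n) = 0 := by
        have := congrArg (· - a) h
        simpa [add_comm] using this
      exact one_ne_zero this
    have hcast : ((k - 1 : ℕ) : ZMod n) = (k : ZMod n) - 1 := by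
      rw [Nat.cast_sub (by omega : 1 ≤ k), Nat.cast_one]
    have hk1 : k ≤ k - 1 := by
      refine hmin (a + 1) (k - 1) (hmem𝔫 _ ha1) ?_
      intro c' l' hc' heq
      rw [hcast] at heq
      have heq' : c' + (l' : ZMod n) = a + (k : ZMod n) - 1 := by
        rw [heq]; ring
      have hlt : l' < k := hgood c' l' hc' heq'
      have hne' : l' ≠ k - 1 := by
        intro h
        subst h
        have : c' = a := by
          have := heq'
          rw [hcast] at this
          have h2 : c' + ((k:ZMod n) - 1) = a + ((k:ZMod n) - 1) := by
            rw [this]; ring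
          exact add_right_cancel h2
        subst this
        exact hnotmem hc'
      omega
    omega
end
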